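/- Let μ be a probability measure on ℝ^P supported in (0,∞)^P, and for t ∈ ℝ^P with all t_p ≤ 0 let M_μ(t) = ∫ e^(Σ_{p=1}^P t_p·β_p) dμ(β). Assume the x_{m,p} are integers with x_{m,p} ≥ 1 for all m, p, and assume Σ_{k ∈ ℕ^M} M_μ(−K_1(k), …, −K_P(k)) < ∞. Then ∫ [∏_{m=1}^M e^(−y_m·(X_m·β)) / (1 + e^(−(X_m·β)))] dμ(β) = Σ_{r ∈ ℕ^P} (K(x,r,+) − K(x,r,−)) · M_μ(−(Y_1 + r_1), …, −(Y_P + r_P)), with the series converging absolutely. -/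

import Mathlib

/-!
For `β ∈ (0,∞)^P` put `t_m = X_m·β > 0`. Each factor `e^{-y t}/(1 + e^{-t})` is the geometric
series `∑ₙ e^{-y t} (-e^{-t})ⁿ`, and multiplying these absolutely convergent series over `m`
gives the series over `k ∈ ℕ^M` of `(-1)^{|k|} e^{-∑_p K_p(k) β_p}`. The hypothesis on the
moment generating function says that the integrals of the absolute values of these terms are
summable, so integral and sum may be exchanged. The `k`-th integral depends on `k` only through
`r = (∑_m k_m x_{m,p})_p`, whose fibres are finite since `x_{m,p} ≥ 1`; regrouping the
absolutely convergent series along these fibres produces the signed counts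
`K(x,r,+) - K(x,r,-)`.
-/

open MeasureTheory

/-- `K_p(k) = Σ_m (y_m + k_m)·x_{m,p}` (with integer-valued covariates `x`). -/
noncomputable def Kcoef {M P : ℕ} (x : Fin M → Fin P → ℕ) (y : Fin M → ℝ)
    (k : Fin M → ℕ) (p : Fin P) : ℝ :=
  ∑ m, (y m + k m) * x m p

/-- `K(x,r,+)`, the number of `k ∈ ℕ^M` with `Σ_m k_m·x_{m,p} = r_p` for all `p`
and `|k|` even. -/
noncomputable def Kplus {M P : ℕ} (x : Fin M → Fin P → ℕ) (r : Fin P → ℕ) : ℕ :=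
  Nat.card {k : Fin M → ℕ // (∀ p, ∑ m, k m * x m p = r p) ∧ Even (∑ m, k m)}

/-- `K(x,r,−)`, the number of `k ∈ ℕ^M` with `Σ_m k_m·x_{m,p} = r_p` for all `p`
and `|k|` odd. -/
noncomputable def Kminus {M P : ℕ} (x : Fin M → Fin P → ℕ) (r : Fin P → ℕ) : ℕ :=
  Nat.card {k : Fin M → ℕ // (∀ p, ∑ m, k m * x m p = r p) ∧ Odd (∑ m, k m)}

open Real

section ProductOfSeries

variable {R β : Type*} [NormedCommRing R]

theorem summable_norm_pi_prod {n : ℕ} {f : Fin n → β → R}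
    (hf : ∀ i, Summable fun j => ‖f i j‖) :
    Summable fun k : Fin n → β => ‖∏ i, f i (k i)‖ := by
  induction n with
  | zero => exact Summable.of_finite
  | succ n ih =>
    refine (Fin.consEquiv fun _ => β).summable_iff.1 ?_
    simpa [Function.comp_def, Fin.prod_univ_succ] using (hf 0).mul_norm (ih fun i => hf i.succ)

theorem hasSum_pi_prod [CompleteSpace R] {n : ℕ} {f : Fin n → β → R}
    (hf : ∀ i, Summable fun j => ‖f i j‖) :
    HasSum (fun k : Fin n → β => ∏ i, f i (k i)) (∏ i, ∑' j, f i j) := by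
  induction n with
  | zero => simp
  | succ n ih =>
    set g : (Fin n → β) → R := fun k => ∏ i : Fin n, f i.succ (k i)
    have hhead : HasSum (f 0) (∑' j, f 0 j) := (hf 0).of_norm.hasSum
    have htail : HasSum g (∏ i : Fin n, ∑' j, f i.succ j) := ih fun i => hf i.succ
    have hsum : Summable fun p : β × (Fin n → β) => f 0 p.1 * g p.2 :=
      summable_mul_of_summable_norm (hf 0) (summable_norm_pi_prod fun i => hf i.succ)
    have hcons : (fun k => ∏ i, f i (k i)) ∘ Fin.consEquiv (fun _ => β) =
        fun p => f 0 p.1 * g p.2 := by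
      funext p
      simp [g, Fin.prod_univ_succ]
    rw [← (Fin.consEquiv fun _ => β).hasSum_iff, hcons, Fin.prod_univ_succ]
    exact hhead.mul htail hsum

end ProductOfSeries

theorem hasSum_exp_mul_neg_exp_pow {t : ℝ} (ht : 0 < t) (c : ℝ) :
    HasSum (fun n : ℕ => exp (-(c * t)) * (-exp (-t)) ^ n) (exp (-(c * t)) / (1 + exp (-t))) := by
  have hq : ‖-exp (-t)‖ < 1 := by simpa [abs_of_pos (exp_pos _)] using ht
  simpa [div_eq_mul_inv] using (hasSum_geometric_of_norm_lt_one hq).mul_left (exp (-(c * t)))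

theorem hasSum_pi_prod_logistic {M : ℕ} {y t : Fin M → ℝ} (ht : ∀ m, 0 < t m) :
    HasSum (fun k : Fin M → ℕ => ∏ m, exp (-(y m * t m)) * (-exp (-t m)) ^ k m)
      (∏ m, exp (-(y m * t m)) / (1 + exp (-t m))) := by
  have hgeom m := hasSum_exp_mul_neg_exp_pow (ht m) (y m)
  rw [Finset.prod_congr rfl fun m _ => (hgeom m).tsum_eq.symm]
  exact hasSum_pi_prod fun m => (hgeom m).summable.norm

theorem tsum_neg_one_pow_eq_card_even_sub_card_odd {α : Type*} [Finite α] (f : α → ℕ) :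
    ∑' a, (-1 : ℝ) ^ f a = Nat.card {a // Even (f a)} - Nat.card {a // Odd (f a)} := by
  classical
  have := Fintype.ofFinite α
  simp only [tsum_fintype, neg_one_pow_eq_ite, Finset.sum_ite, Finset.sum_const, nsmul_eq_mul,
    Nat.card_eq_fintype_card, Fintype.card_subtype, ← Nat.not_even_iff_odd]
  ring

theorem integrable_exp_sum_neg_mul {ι : Type*} [Fintype ι] {μ : Measure (ι → ℝ)}
    [IsFiniteMeasure μ] (hμ : ∀ᵐ β ∂μ, ∀ i, 0 ≤ β i) {c : ι → ℝ} (hc : ∀ i, 0 ≤ c i) :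
    Integrable (fun β => exp (∑ i, -c i * β i)) μ := by
  refine (integrable_const 1).mono' (Continuous.aestronglyMeasurable (by fun_prop)) ?_
  filter_upwards [hμ] with β hβ
  rw [Real.norm_of_nonneg (exp_pos _).le, exp_le_one_iff]
  exact Finset.sum_nonpos fun i _ => by nlinarith [mul_nonneg (hc i) (hβ i)]

section Diophantine

variable {M P : ℕ} (x : Fin M → Fin P → ℕ)

def multidegree (k : Fin M → ℕ) (p : Fin P) : ℕ := ∑ m, k m * x m p

theorem Kcoef_eq_add_multidegree (y : Fin M → ℝ) (k : Fin M → ℕ) (p : Fin P) :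
    Kcoef x y k p = ∑ m, y m * x m p + multidegree x k p := by
  simp [Kcoef, multidegree, add_mul, Finset.sum_add_distrib]

theorem sum_Kcoef_mul (y : Fin M → ℝ) (k : Fin M → ℕ) (β : Fin P → ℝ) :
    ∑ p, Kcoef x y k p * β p = ∑ m, (y m + k m) * ∑ p, (x m p : ℝ) * β p := by
  simp only [Kcoef, Finset.sum_mul, Finset.mul_sum, mul_assoc]
  exact Finset.sum_comm

theorem neg_one_pow_mul_exp_Kcoef (y : Fin M → ℝ) (k : Fin M → ℕ) (β : Fin P → ℝ) :
    (-1 : ℝ) ^ (∑ m, k m) * exp (∑ p, -Kcoef x y k p * β p) =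
      ∏ m, exp (-(y m * ∑ p, (x m p : ℝ) * β p)) * (-exp (-∑ p, (x m p : ℝ) * β p)) ^ k m := by
  have hsum : ∑ p, -Kcoef x y k p * β p = ∑ m, -((y m + k m) * ∑ p, (x m p : ℝ) * β p) := by
    simp only [neg_mul, Finset.sum_neg_distrib, sum_Kcoef_mul]
  rw [hsum, exp_sum, ← Finset.prod_pow_eq_pow_sum, ← Finset.prod_mul_distrib]
  refine Finset.prod_congr rfl fun m _ => ?_
  rw [neg_pow (exp _), ← exp_nat_mul, mul_left_comm, ← exp_add]
  ring_nf

theorem hasSum_neg_one_pow_mul_exp_Kcoef (hx : ∀ m p, 1 ≤ x m p) (p₀ : Fin P) (y : Fin M → ℝ)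
    {β : Fin P → ℝ} (hβ : ∀ p, 0 < β p) :
    HasSum (fun k : Fin M → ℕ => (-1 : ℝ) ^ (∑ m, k m) * exp (∑ p, -Kcoef x y k p * β p))
      (∏ m, exp (-(y m * ∑ p, (x m p : ℝ) * β p)) / (1 + exp (-∑ p, (x m p : ℝ) * β p))) := by
  have ht m : 0 < ∑ p, (x m p : ℝ) * β p :=
    Finset.sum_pos (fun p _ => mul_pos (by exact_mod_cast hx m p) (hβ p)) ⟨p₀, Finset.mem_univ _⟩
  simpa only [neg_one_pow_mul_exp_Kcoef] using hasSum_pi_prod_logistic ht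

theorem Kcoef_nonneg {y : Fin M → ℝ} (hy : ∀ m, 0 ≤ y m) (k : Fin M → ℕ) (p : Fin P) :
    0 ≤ Kcoef x y k p :=
  Finset.sum_nonneg fun m _ => by have := hy m; positivity

theorem integral_prod_logistic_eq_tsum (hx : ∀ m p, 1 ≤ x m p) (p₀ : Fin P) {y : Fin M → ℝ}
    (hy : ∀ m, 0 ≤ y m) {μ : Measure (Fin P → ℝ)} [IsFiniteMeasure μ]
    (hμ : ∀ᵐ β ∂μ, ∀ p, 0 < β p)
    (hsum : Summable fun k : Fin M → ℕ => ∫ β, exp (∑ p, -Kcoef x y k p * β p) ∂μ) :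
    ∫ β, ∏ m, exp (-(y m * ∑ p, (x m p : ℝ) * β p)) / (1 + exp (-∑ p, (x m p : ℝ) * β p)) ∂μ =
      ∑' k : Fin M → ℕ, (-1 : ℝ) ^ (∑ m, k m) * ∫ β, exp (∑ p, -Kcoef x y k p * β p) ∂μ := by
  have hint k : Integrable (fun β => exp (∑ p, -Kcoef x y k p * β p)) μ :=
    integrable_exp_sum_neg_mul (hμ.mono fun β h p => (h p).le) (Kcoef_nonneg x hy k)
  rw [integral_congr_ae (hμ.mono fun β hβ =>
      (hasSum_neg_one_pow_mul_exp_Kcoef x hx p₀ y hβ).tsum_eq.symm),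
    ← integral_tsum_of_summable_integral_norm (fun k => (hint k).const_mul _)]
  · simp only [integral_const_mul]
  · simpa [abs_of_nonneg (exp_pos _).le] using hsum

theorem finite_multidegree_fiber (hx : ∀ m p, 1 ≤ x m p) (p₀ : Fin P) (r : Fin P → ℕ) :
    (multidegree x ⁻¹' {r}).Finite := by
  refine (Set.Finite.pi fun _ => Set.finite_Iic (r p₀)).subset fun k hk m _ => ?_
  rw [Set.mem_preimage, Set.mem_singleton_iff] at hk
  calc k m ≤ k m * x m p₀ := Nat.le_mul_of_pos_right _ (hx m p₀)
    _ ≤ multidegree x k p₀ := Finset.single_le_sum (f := fun m => k m * x m p₀)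
        (fun _ _ => Nat.zero_le _) (Finset.mem_univ m)
    _ = r p₀ := by rw [hk]

theorem tsum_neg_one_pow_fiber (hx : ∀ m p, 1 ≤ x m p) (p₀ : Fin P) (r : Fin P → ℕ) :
    ∑' k : multidegree x ⁻¹' {r}, (-1 : ℝ) ^ (∑ m, k.1 m) = Kplus x r - Kminus x r := by
  have := (finite_multidegree_fiber x hx p₀ r).to_subtype
  have hcard (q : (Fin M → ℕ) → Prop) : Nat.card {k : multidegree x ⁻¹' {r} // q k} =
      Nat.card {k // (∀ p, ∑ m, k m * x m p = r p) ∧ q k} :=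
    Nat.card_congr <| (Equiv.subtypeSubtypeEquivSubtypeInter (· ∈ multidegree x ⁻¹' {r}) q).trans
      (Equiv.subtypeEquivRight fun k => by simp [multidegree, funext_iff])
  rw [tsum_neg_one_pow_eq_card_even_sub_card_odd, Kplus, Kminus,
    hcard fun k => Even (∑ m, k m), hcard fun k => Odd (∑ m, k m)]

theorem hasSum_Kplus_sub_Kminus_mul (hx : ∀ m p, 1 ≤ x m p) (p₀ : Fin P)
    {a : (Fin P → ℕ) → ℝ}
    (ha : Summable fun k : Fin M → ℕ => (-1 : ℝ) ^ (∑ m, k m) * a (multidegree x k)) :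
    HasSum (fun r => ((Kplus x r : ℝ) - Kminus x r) * a r)
      (∑' k : Fin M → ℕ, (-1 : ℝ) ^ (∑ m, k m) * a (multidegree x k)) := by
  refine (ha.hasSum.tsum_fiberwise (multidegree x)).congr_fun fun r => ?_
  calc ((Kplus x r : ℝ) - Kminus x r) * a r
      = ∑' k : multidegree x ⁻¹' {r}, (-1 : ℝ) ^ (∑ m, k.1 m) * a r := by
        rw [tsum_mul_right, tsum_neg_one_pow_fiber x hx p₀]
    _ = _ := tsum_congr fun k => by rw [k.2]

end Diophantine

theorem integral_logit_eq_tsum_mgf_diophantine_general (M P : ℕ) (hP : 1 ≤ P)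
    (x : Fin M → Fin P → ℕ) (hx : ∀ m p, 1 ≤ x m p)
    (y : Fin M → ℝ) (hy : ∀ m, y m = 0 ∨ y m = 1)
    (μ : Measure (Fin P → ℝ)) [IsProbabilityMeasure μ]
    (hsupp : μ {β | ∀ p, 0 < β p}ᶜ = 0)
    (hsum : Summable fun k : Fin M → ℕ =>
      ∫ β, Real.exp (∑ p, -Kcoef x y k p * β p) ∂μ) :
    Summable (fun r : Fin P → ℕ =>
      |((Kplus x r : ℝ) - (Kminus x r : ℝ)) *
        ∫ β, Real.exp (∑ p, -((∑ m, y m * x m p) + r p) * β p) ∂μ|) ∧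
    ∫ β, ∏ m, Real.exp (-(y m * ∑ p, (x m p : ℝ) * β p)) /
        (1 + Real.exp (-(∑ p, (x m p : ℝ) * β p))) ∂μ
      = ∑' r : Fin P → ℕ,
          ((Kplus x r : ℝ) - (Kminus x r : ℝ)) *
            ∫ β, Real.exp (∑ p, -((∑ m, y m * x m p) + r p) * β p) ∂μ := by
  set J : (Fin P → ℕ) → ℝ := fun r => ∫ β, exp (∑ p, -((∑ m, y m * x m p) + r p) * β p) ∂μ
  have hIJ k : ∫ β, exp (∑ p, -Kcoef x y k p * β p) ∂μ = J (multidegree x k) := by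
    simp only [J, Kcoef_eq_add_multidegree]
  have hy₀ m : 0 ≤ y m := by rcases hy m with h | h <;> simp [h]
  have hregroup := hasSum_Kplus_sub_Kminus_mul x hx ⟨0, hP⟩ (a := J)
    (.of_norm <| (summable_abs_iff.2 hsum).congr fun k => by rw [hIJ]; simp)
  refine ⟨summable_abs_iff.2 hregroup.summable, ?_⟩
  rw [integral_prod_logistic_eq_tsum x hx ⟨0, hP⟩ hy₀ (ae_iff.2 hsupp) hsum]
  simpa only [hIJ] using hregroup.tsum_eq.symm

/-- Theorem 5 of the paper: regrouped (Diophantine) series expansion of the marginalized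
logit likelihood against any probability distribution `μ` supported in `(0,∞)^P`, in terms
of evaluations of the moment generating function `M_μ(t) = ∫ e^(Σ_p t_p β_p) dμ(β)` at the
points `(−(Y_1+r_1), …, −(Y_P+r_P))`. -/
theorem integral_logit_eq_tsum_mgf_diophantine (M P : ℕ) (hM : 1 ≤ M) (hP : 1 ≤ P)
    (x : Fin M → Fin P → ℕ) (hx : ∀ m p, 1 ≤ x m p)
    (y : Fin M → ℝ) (hy : ∀ m, y m = 0 ∨ y m = 1)
    (μ : Measure (Fin P → ℝ)) [IsProbabilityMeasure μ]
    (hsupp : μ {β | ∀ p, 0 < β p}ᶜ = 0)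
    (hsum : Summable fun k : Fin M → ℕ =>
      ∫ β, Real.exp (∑ p, -Kcoef x y k p * β p) ∂μ) :
    Summable (fun r : Fin P → ℕ =>
      |((Kplus x r : ℝ) - (Kminus x r : ℝ)) *
        ∫ β, Real.exp (∑ p, -((∑ m, y m * x m p) + r p) * β p) ∂μ|) ∧
    ∫ β, ∏ m, Real.exp (-(y m * ∑ p, (x m p : ℝ) * β p)) /
        (1 + Real.exp (-(∑ p, (x m p : ℝ) * β p))) ∂μ
      = ∑' r : Fin P → ℕ,
          ((Kplus x r : ℝ) - (Kminus x r : ℝ)) *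
            ∫ β, Real.exp (∑ p, -((∑ m, y m * x m p) + r p) * β p) ∂μ :=
  integral_logit_eq_tsum_mgf_diophantine_general M P hP x hx y hy μ hsupp hsum
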